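/- arXiv:2309.11304 — 3 statements merged into one kernel-verified Lean document; each statement's English description precedes it below -/
import Mathlib

section
/- (No degeneracy defect theorem) Let X be a parafinite simplicial set with degeneracy operators S_{n,i} on its simplicial Hilbert space. Then for 0 ≤ i < j ≤ n, S_{n,i}† S_{n,j} = S_{n−1,j−1} S_{n−1,i}†. -/
/-!
A degeneracy `s_{n,i}` is injective (`d_{n,i}` is a left inverse), so `S_{n,i}` maps basis vectors
to basis vectors injectively; its adjoint therefore sends `|s_{n,i} ζ⟩` to `|ζ⟩` and kills every
basis vector outside the image of `s_{n,i}`. On a basis vector `|σ⟩` both sides of the identity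
are then computed directly: if `σ = s_i ζ`, the simplicial identity `s_j s_i = s_i s_{j-1}` makes
both sides `|s_{j-1} ζ⟩`; otherwise both vanish, because `s_i τ = s_j σ` would give
`σ = d_{j+1} s_j σ = d_{j+1} s_i τ = s_i d_j τ`.
-/

structure SimplicialSet where
  X : ℕ → Type
  d : (n : ℕ) → ℕ → X (n+1) → X n
  s : (n : ℕ) → ℕ → X n → X (n+1)
  dd : ∀ (n i j : ℕ), i < j → j ≤ n+2 → ∀ x : X (n+2),
    d n i (d (n+1) j x) = d n (j-1) (d (n+1) i x)
  ds_lt : ∀ (n i j : ℕ), i < j → j ≤ n+1 → ∀ x : X (n+1),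
    d (n+1) i (s (n+1) j x) = s n (j-1) (d n i x)
  ds_eq : ∀ (n j : ℕ), j ≤ n → ∀ x : X n, d n j (s n j x) = x
  ds_eq' : ∀ (n j : ℕ), j ≤ n → ∀ x : X n, d n (j+1) (s n j x) = x
  ds_gt : ∀ (n i j : ℕ), j+1 < i → i ≤ n+2 → ∀ x : X (n+1),
    d (n+1) i (s (n+1) j x) = s n j (d n (i-1) x)
  ss : ∀ (n i j : ℕ), i ≤ j → j ≤ n → ∀ x : X n,
    s (n+1) i (s n j x) = s (n+1) (j+1) (s n i x)

/-- The degeneracy operator `S_{n,i}` on the simplicial Hilbert space, defined on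
the simplex basis by `S_{n,i}|σ⟩ = |s_{n,i} σ⟩`. -/
noncomputable def Sop (G : SimplicialSet) [∀ n, Fintype (G.X n)]
    [∀ n, DecidableEq (G.X n)] (n i : ℕ) :
    EuclideanSpace ℂ (G.X n) →ₗ[ℂ] EuclideanSpace ℂ (G.X (n+1)) :=
  (PiLp.basisFun 2 ℂ (G.X n)).constr ℂ fun σ => EuclideanSpace.single (G.s n i σ) 1

namespace LinearMap

variable {𝕜 α β : Type*} [RCLike 𝕜] [Fintype α] [Fintype β] [DecidableEq α] [DecidableEq β]
  {A : EuclideanSpace 𝕜 α →ₗ[𝕜] EuclideanSpace 𝕜 β} {f : α → β}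

theorem adjoint_apply_of_map_single (hA : ∀ a, A (EuclideanSpace.single a 1) =
    EuclideanSpace.single (f a) 1) (x : EuclideanSpace 𝕜 β) (a : α) :
    adjoint A x a = x (f a) := by
  simpa [EuclideanSpace.inner_single_left, hA] using
    adjoint_inner_right A (EuclideanSpace.single a 1) x

theorem adjoint_single_of_map_single (hA : ∀ a, A (EuclideanSpace.single a 1) =
    EuclideanSpace.single (f a) 1) (hf : Function.Injective f) (a : α) :
    adjoint A (EuclideanSpace.single (f a) 1) = EuclideanSpace.single a 1 := by
  ext a'
  simp [adjoint_apply_of_map_single hA, hf.eq_iff]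

theorem adjoint_single_eq_zero_of_map_single (hA : ∀ a, A (EuclideanSpace.single a 1) =
    EuclideanSpace.single (f a) 1) {b : β} (hb : b ∉ Set.range f) :
    adjoint A (EuclideanSpace.single b 1) = 0 := by
  ext a
  simp only [adjoint_apply_of_map_single hA, PiLp.single_apply, PiLp.zero_apply]
  exact if_neg fun h => hb ⟨a, h⟩

end LinearMap

namespace SimplicialSet

variable {G : SimplicialSet} {n i j : ℕ}

theorem s_injective (hi : i ≤ n) : Function.Injective (G.s n i) :=
  Function.LeftInverse.injective (G.ds_eq n i hi)

theorem s_s_of_lt (hij : i < j) (hj : j ≤ n + 1) (ζ : G.X n) :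
    G.s (n+1) j (G.s n i ζ) = G.s (n+1) i (G.s n (j-1) ζ) := by
  obtain ⟨k, rfl⟩ : ∃ k, j = k + 1 := ⟨j - 1, by omega⟩
  exact (G.ss n i k (by omega) (by omega) ζ).symm

theorem mem_range_s_of_s_eq_s (hij : i < j) (hj : j ≤ n + 1) {τ σ : G.X (n+1)}
    (h : G.s (n+1) i τ = G.s (n+1) j σ) : σ ∈ Set.range (G.s n i) :=
  ⟨G.d n j τ, by
    rw [← G.ds_eq' (n+1) j hj σ, ← h, G.ds_gt n (j+1) i (by omega) (by omega) τ,
      Nat.add_sub_cancel]⟩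

end SimplicialSet

theorem Sop_single (G : SimplicialSet) [∀ n, Fintype (G.X n)] [∀ n, DecidableEq (G.X n)]
    (n i : ℕ) (σ : G.X n) :
    Sop G n i (EuclideanSpace.single σ 1) = EuclideanSpace.single (G.s n i σ) 1 := by
  simp [Sop]

/-- No degeneracy defect theorem: for `0 ≤ i < j ≤ n`,
`S_{n,i}† S_{n,j} = S_{n-1,j-1} S_{n-1,i}†` (stated here with `n` replaced by
`n+1`, so the identity is an equality of operators on `H_{n+1}`). -/
theorem no_degeneracy_defect (G : SimplicialSet) [∀ n, Fintype (G.X n)]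
    [∀ n, DecidableEq (G.X n)] (n i j : ℕ) (hij : i < j) (hj : j ≤ n + 1) :
    LinearMap.adjoint (Sop G (n+1) i) ∘ₗ Sop G (n+1) j
      = Sop G n (j-1) ∘ₗ LinearMap.adjoint (Sop G n i) := by
  refine (PiLp.basisFun 2 ℂ (G.X (n+1))).ext fun σ => ?_
  rw [PiLp.basisFun_apply, LinearMap.comp_apply, LinearMap.comp_apply, Sop_single]
  by_cases hσ : σ ∈ Set.range (G.s n i)
  · obtain ⟨ζ, rfl⟩ := hσ
    rw [G.s_s_of_lt hij hj,
      LinearMap.adjoint_single_of_map_single (Sop_single G (n+1) i) (G.s_injective (by omega)),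
      LinearMap.adjoint_single_of_map_single (Sop_single G n i) (G.s_injective (by omega)),
      Sop_single]
  · rw [LinearMap.adjoint_single_eq_zero_of_map_single (Sop_single G n i) hσ, map_zero,
      LinearMap.adjoint_single_eq_zero_of_map_single (Sop_single G (n+1) i)]
    rintro ⟨τ, hτ⟩
    exact hσ (G.mem_range_s_of_s_eq_s hij hj hτ)
end

section
/- For 0 ≤ i < j ≤ n, if σ_n, ω_n are n-simplices of a simplicial set X with s_{n,i} ω_n = s_{n,j} σ_n, then d_{n,j} ω_n = d_{n,i} σ_n and this common element ζ_{n−1} satisfies s_{n−1,i} ζ_{n−1} = σ_n and s_{n−1,j−1} ζ_{n−1} = ω_n. -/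
/-- For `0 ≤ i < j ≤ n`, if `s_{n,i} ω = s_{n,j} σ` then `d_{n,j} ω = d_{n,i} σ`,
and this common element `ζ` satisfies `s_{n-1,i} ζ = σ` and `s_{n-1,j-1} ζ = ω`.
(Stated with `n` replaced by `n+1`: `σ, ω` are `(n+1)`-simplices.) -/
theorem common_degeneracy_section (G : SimplicialSet) (n i j : ℕ)
    (hij : i < j) (hj : j ≤ n + 1) (σ ω : G.X (n+1))
    (h : G.s (n+1) i ω = G.s (n+1) j σ) :
    G.d n j ω = G.d n i σ ∧ G.s n i (G.d n i σ) = σ ∧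
      G.s n (j-1) (G.d n j ω) = ω := by
  have hω : ω = G.s n (j-1) (G.d n i σ) := by
    have h1 := congrArg (G.d (n+1) i) h
    rwa [G.ds_eq (n+1) i (le_trans (le_of_lt hij) hj),
      G.ds_lt n i j hij hj σ] at h1
  have hσ : σ = G.s n i (G.d n j ω) := by
    have h2 := congrArg (G.d (n+1) (j+1)) h
    rw [G.ds_eq' (n+1) j hj σ,
      G.ds_gt n (j+1) i (Nat.succ_lt_succ hij) (Nat.succ_le_succ hj) ω] at h2
    simpa using h2.symm
  have key : G.d n j ω = G.d n i σ := by
    conv_lhs => rw [hω]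
    obtain ⟨k, rfl⟩ : ∃ k, j = k + 1 := ⟨j - 1, (Nat.succ_pred_eq_of_pos (Nat.lt_of_le_of_lt (Nat.zero_le i) hij)).symm⟩
    simpa using G.ds_eq' n k (Nat.lt_succ_iff.mp hj) (G.d n i σ)
  refine ⟨key, ?_, ?_⟩
  · rw [← key, ← hσ]
  · rw [key, ← hω]
end

section
/- Let C be a category and let σ_n ∈ N_nC, ω_{n+2} ∈ N_{n+2}C with d_{n+2,i} ω_{n+2} = s_{n,j} σ_n for some 0 ≤ i ≤ j ≤ n. Then there exists a unique ζ_{n+1} ∈ N_{n+1}C such that d_{n+1,i} ζ_{n+1} = σ_n and s_{n+1,j+1} ζ_{n+1} = ω_{n+2}. -/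
/-!
A solution `ζ` is forced to be `d_{j+1} ω`, because `d_{j+1} s_{j+1} = id`. Since `i ≤ j`, the
arrow `j+1 → j+2` of `ω` is the arrow `j → j+1` of `d_i ω = s_j σ`, an identity. In the nerve,
`s_{j+1} d_{j+1} ω` is `ω` reindexed along the self-map of `[n+2]` that moves only the vertex
`j+1`, to `j+2`; as the arrow between them is an identity, this is `ω` again. The remaining
face condition `d_i d_{j+1} ω = d_j d_i ω = d_j s_j σ = σ` is a simplicial identity.
-/

open CategoryTheory Simplicial

namespace CategoryTheory

variable {C : Type*} [Category C]

theorem Functor.arrowMk_map_homOfLE_congr {P : Type*} [Preorder P] (F : P ⥤ C) {a b a' b' : P}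
    (ha : a = a') (hb : b = b') (h : a ≤ b) (h' : a' ≤ b') :
    Arrow.mk (F.map (homOfLE h)) = Arrow.mk (F.map (homOfLE h')) := by
  subst ha hb; rfl

theorem Functor.monotone_functor_comp_eq_self {P : Type*} [Preorder P] (F : P ⥤ C) (r : P →o P)
    (hr : ∀ a, a ≤ r a) (hF : ∀ a, ∃ c, Arrow.mk (F.map (homOfLE (hr a))) = Arrow.mk (𝟙 c)) :
    r.monotone.functor ⋙ F = F := by
  choose c hc using hF
  choose hsrc htgt hmap using fun a => (Arrow.mk_eq_mk_iff _ _).1 (hc a)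
  have hobj (a : P) : F.obj (r a) = F.obj a := (htgt a).trans (hsrc a).symm
  refine Functor.ext hobj fun a b f => ?_
  have hsq : F.map f ≫ F.map (homOfLE (hr b)) =
      F.map (homOfLE (hr a)) ≫ F.map (homOfLE (r.monotone (leOfHom f))) := by
    simp only [← F.map_comp]; rfl
  simp only [hmap, Category.id_comp, eqToHom_trans] at hsq
  exact (eqToHom_comp_iff _ _ _).1 hsq.symm

namespace nerve

theorem arrowMk_map_δ_of_le {m : ℕ} (ω : ComposableArrows C (m + 1)) {i : Fin (m + 2)}
    {l : Fin m} (hil : i ≤ l.castSucc.castSucc) :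
    Arrow.mk (((nerve C).δ i ω).map (homOfLE l.castSucc_le_succ)) =
      Arrow.mk (ω.map (homOfLE l.succ.castSucc_le_succ)) :=
  Functor.arrowMk_map_homOfLE_congr ω (Fin.succAbove_of_le_castSucc _ _ hil)
    (Fin.succAbove_of_le_castSucc _ _
      (hil.trans (Fin.castSucc_le_castSucc_iff.2 l.castSucc_le_succ))) _ _

theorem exists_arrowMk_map_σ_self_eq_id {m : ℕ} (x : ComposableArrows C m) (k : Fin (m + 1)) :
    ∃ c, Arrow.mk (((nerve C).σ k x).map (homOfLE k.castSucc_le_succ)) = Arrow.mk (𝟙 c) :=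
  ⟨x.obj k, (Functor.arrowMk_map_homOfLE_congr x (Fin.predAbove_castSucc_self k)
    (Fin.predAbove_succ_self k) _ le_rfl).trans (congrArg Arrow.mk (x.map_id k))⟩

theorem σ_δ_castSucc_eq_self {m : ℕ} (ω : ComposableArrows C (m + 1)) (k : Fin (m + 1))
    (hk : ∃ c, Arrow.mk (ω.map (homOfLE k.castSucc_le_succ)) = Arrow.mk (𝟙 c)) :
    (nerve C).σ k ((nerve C).δ k.castSucc ω) = ω := by
  set r := (SimplexCategory.σ k ≫ SimplexCategory.δ k.castSucc).toOrderHom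
  have hr_self : r k.castSucc = k.succ := by simp [r, SimplexCategory.σ, SimplexCategory.δ]
  have hr_of_ne {a} (ha : a ≠ k.castSucc) : r a = a := by
    simp [r, SimplexCategory.σ, SimplexCategory.δ, Fin.succAbove_predAbove ha]
  have hr (a) : a ≤ r a := by
    by_cases ha : a = k.castSucc
    · rw [ha, hr_self]; exact k.castSucc_le_succ
    · rw [hr_of_ne ha]
  refine Functor.monotone_functor_comp_eq_self ω r hr fun a => ?_
  by_cases ha : a = k.castSucc
  · subst ha
    obtain ⟨c, hc⟩ := hk
    exact ⟨c, (Functor.arrowMk_map_homOfLE_congr ω rfl hr_self _ _).trans hc⟩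
  · exact ⟨ω.obj a, (Functor.arrowMk_map_homOfLE_congr ω rfl (hr_of_ne ha) _ le_rfl).trans
      (congrArg Arrow.mk (ω.map_id a))⟩

end nerve

end CategoryTheory

/-- Semi-perfectness of nerves (DS case): if `σ ∈ N_n C`, `ω ∈ N_{n+2} C` and
`d_{n+2,i} ω = s_{n,j} σ` for some `0 ≤ i ≤ j ≤ n`, then there is a unique
`ζ ∈ N_{n+1} C` with `d_{n+1,i} ζ = σ` and `s_{n+1,j+1} ζ = ω`. -/
theorem nerve_DS_semiperfectness {C : Type*} [Category C] (n : ℕ)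
    (i j : Fin (n+1)) (hij : i ≤ j) (x : nerve C _⦋n⦌) (ω : nerve C _⦋n+2⦌)
    (hd : (nerve C).δ (i.castSucc.castSucc) ω = (nerve C).σ j x) :
    ∃! ζ : nerve C _⦋n+1⦌,
      (nerve C).δ i.castSucc ζ = x ∧ (nerve C).σ j.succ ζ = ω := by
  have hij' : i.castSucc ≤ j.castSucc := Fin.castSucc_le_castSucc_iff.2 hij
  have hedge : ∃ c, Arrow.mk (ω.map (homOfLE j.succ.castSucc_le_succ)) = Arrow.mk (𝟙 c) := by
    obtain ⟨c, hc⟩ := nerve.exists_arrowMk_map_σ_self_eq_id x j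
    rw [← hd, nerve.arrowMk_map_δ_of_le ω (Fin.castSucc_le_castSucc_iff.2 hij')] at hc
    exact ⟨c, hc⟩
  refine ⟨(nerve C).δ j.succ.castSucc ω, ⟨?_, nerve.σ_δ_castSucc_eq_self ω j.succ hedge⟩, ?_⟩
  · rw [← Fin.succ_castSucc, SSet.δ_comp_δ_apply hij', hd, SSet.δ_comp_σ_self_apply]
  · rintro ζ ⟨-, rfl⟩
    exact (SSet.δ_comp_σ_self_apply j.succ ζ).symm
end
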